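/- arXiv:1809.10390 — 6 statements merged into one kernel-verified Lean document; each statement's English description precedes it below -/
import Mathlib

section
/- For every s ∈ ℂ with Re(s) > 1 and every z in the upper half-plane, the Lipschitz summation formula holds: ∑_{n=1}^∞ n^{s−1} e^{2πi n z} = Γ(s) (2π)^{−s} e^{iπs/2} ∑_{n∈ℤ} 1/(z+n)^s. -/
/-!
Apply Poisson summation to the one-sided kernel `f(t) = t^(s-1) e^(2πizt)` for `t > 0`, `f(t) = 0`
for `t ≤ 0`; it is continuous for `Re s > 1` and decays exponentially since `Im z > 0`. Its
Fourier transform at `ξ` is the Gamma integral `∫₀^∞ t^(s-1) e^(-at) dt = Γ(s) a^(-s)` with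
complex parameter `a = 2πi(ξ - z)`, obtained from real `a` by analytic continuation. Writing
`a = 2π · (-i) · (z - ξ)` with `arg (z - ξ) ∈ (0, π)` splits the power as
`(2π)^(-s) e^(iπs/2) (z - ξ)^(-s)`; summing `f` and `𝓕 f` over the integers gives the formula.
-/

open Real Complex MeasureTheory Set Filter Topology Asymptotics FourierTransform

section GammaIntegral

variable {s a : ℂ}

lemma norm_ofReal_cpow_mul_cexp_neg_mul {t : ℝ} (ht : 0 < t) :
    ‖(t : ℂ) ^ (s - 1) * cexp (-(a * t))‖ = t ^ (s.re - 1) * rexp (-(a.re * t)) := by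
  rw [norm_mul, norm_exp, norm_cpow_eq_rpow_re_of_pos ht]
  simp

lemma continuousOn_ofReal_cpow_mul_cexp_neg_mul :
    ContinuousOn (fun t : ℝ ↦ (t : ℂ) ^ (s - 1) * cexp (-(a * t))) (Ioi 0) := fun t ht ↦
  ((continuousAt_ofReal_cpow_const _ _ (Or.inr (ne_of_gt ht))).mul
    (by fun_prop)).continuousWithinAt

lemma integrableOn_ofReal_cpow_mul_cexp_neg_mul_Ioi (hs : 0 < s.re) (ha : 0 < a.re) :
    IntegrableOn (fun t : ℝ ↦ (t : ℂ) ^ (s - 1) * cexp (-(a * t))) (Ioi 0) := by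
  have hreal :
      IntegrableOn (fun t : ℝ ↦ t ^ (s.re - 1) * rexp (-a.re * t ^ (1 : ℝ))) (Ioi 0) :=
    integrableOn_rpow_mul_exp_neg_mul_rpow (by linarith) one_pos ha
  refine hreal.mono' (continuousOn_ofReal_cpow_mul_cexp_neg_mul.aestronglyMeasurable
    measurableSet_Ioi) ?_
  filter_upwards [ae_restrict_mem measurableSet_Ioi] with t ht
  rw [norm_ofReal_cpow_mul_cexp_neg_mul ht, rpow_one, neg_mul]

lemma differentiableAt_integral_ofReal_cpow_mul_cexp_neg_mul_Ioi (hs : 0 < s.re)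
    (ha : 0 < a.re) :
    DifferentiableAt ℂ
      (fun w : ℂ ↦ ∫ t : ℝ in Ioi 0, (t : ℂ) ^ (s - 1) * cexp (-(w * t))) a := by
  have hδ : 0 < a.re / 2 := half_pos ha
  -- The `w`-derivative is minus the integrand for `s + 1`, which on the ball
  -- `‖w - a‖ < a.re / 2` is dominated by the integrand for `s + 1` at `a.re / 2`.
  have hderiv : ∀ t ∈ Ioi (0 : ℝ), ∀ w : ℂ,
      HasDerivAt (fun w : ℂ ↦ (t : ℂ) ^ (s - 1) * cexp (-(w * t)))
        (-((t : ℂ) ^ (s + 1 - 1) * cexp (-(w * t)))) w := by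
    intro t ht w
    have hexp : HasDerivAt (fun w : ℂ ↦ cexp (-(w * t))) (cexp (-(w * t)) * -(t : ℂ)) w := by
      simpa using ((hasDerivAt_id w).mul_const (t : ℂ)).neg.cexp
    refine (hexp.const_mul ((t : ℂ) ^ (s - 1))).congr_deriv ?_
    rw [add_sub_cancel_right, ← sub_add_cancel s 1,
      cpow_add _ _ (ofReal_ne_zero.mpr (ne_of_gt ht)), cpow_one, add_sub_cancel_right]
    ring
  have hbound : ∀ t ∈ Ioi (0 : ℝ), ∀ w ∈ Metric.ball a (a.re / 2),
      ‖-((t : ℂ) ^ (s + 1 - 1) * cexp (-(w * t)))‖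
        ≤ ‖(t : ℂ) ^ (s + 1 - 1) * cexp (-(((a.re / 2 : ℝ) : ℂ) * t))‖ := by
    intro t ht w hw
    have hwre : a.re / 2 ≤ w.re := by
      have := (abs_re_le_norm (w - a)).trans (mem_ball_iff_norm.mp hw).le
      rw [sub_re] at this
      linarith [neg_abs_le (w.re - a.re)]
    rw [norm_neg, norm_ofReal_cpow_mul_cexp_neg_mul ht, norm_ofReal_cpow_mul_cexp_neg_mul ht,
      ofReal_re]
    have ht : 0 < t := ht
    exact mul_le_mul_of_nonneg_left (Real.exp_le_exp.mpr (by nlinarith)) (rpow_nonneg ht.le _)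
  have hint := hasDerivAt_integral_of_dominated_loc_of_deriv_le (μ := volume.restrict (Ioi 0))
    (F := fun w (t : ℝ) ↦ (t : ℂ) ^ (s - 1) * cexp (-(w * t)))
    (F' := fun w (t : ℝ) ↦ -((t : ℂ) ^ (s + 1 - 1) * cexp (-(w * t))))
    (Metric.ball_mem_nhds a hδ)
    (.of_forall fun w ↦ continuousOn_ofReal_cpow_mul_cexp_neg_mul.aestronglyMeasurable
      measurableSet_Ioi)
    (integrableOn_ofReal_cpow_mul_cexp_neg_mul_Ioi hs ha)
    ((continuousOn_ofReal_cpow_mul_cexp_neg_mul (s := s + 1)).neg.aestronglyMeasurable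
      measurableSet_Ioi)
    (ae_restrict_of_forall_mem measurableSet_Ioi hbound)
    (integrableOn_ofReal_cpow_mul_cexp_neg_mul_Ioi (by rw [add_re, one_re]; linarith)
      (by rwa [ofReal_re])).norm
    (ae_restrict_of_forall_mem measurableSet_Ioi fun t ht w _ ↦ hderiv t ht w)
  exact hint.2.differentiableAt

lemma eqOn_re_pos_of_eq_ofReal {E : Type*} [NormedAddCommGroup E] [NormedSpace ℂ E]
    [CompleteSpace E] {f g : ℂ → E} (hf : DifferentiableOn ℂ f {w | 0 < w.re})
    (hg : DifferentiableOn ℂ g {w | 0 < w.re}) (hfg : ∀ r : ℝ, 0 < r → f r = g r) :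
    EqOn f g {w | 0 < w.re} := by
  have hopen : IsOpen {w : ℂ | 0 < w.re} := isOpen_lt continuous_const continuous_re
  have hreal : Tendsto ofReal (𝓝[≠] 1) (𝓝[≠] 1) :=
    continuous_ofReal.continuousWithinAt.tendsto_nhdsWithin fun r hr ↦ by
      simpa [ofReal_eq_one] using hr
  have hpos : ∀ᶠ r : ℝ in 𝓝[≠] 1, 0 < r :=
    eventually_nhdsWithin_of_eventually_nhds (eventually_gt_nhds one_pos)
  exact (hf.analyticOnNhd hopen).eqOn_of_preconnected_of_frequently_eq (hg.analyticOnNhd hopen)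
    (convex_halfSpace_re_gt 0).isPreconnected (by simp)
    (hreal.frequently (hpos.mono hfg).frequently)

lemma integral_ofReal_cpow_mul_cexp_neg_mul_Ioi (hs : 0 < s.re) (ha : 0 < a.re) :
    ∫ t : ℝ in Ioi 0, (t : ℂ) ^ (s - 1) * cexp (-(a * t)) = Gamma s * a ^ (-s) := by
  refine eqOn_re_pos_of_eq_ofReal
    (f := fun w ↦ ∫ t : ℝ in Ioi 0, (t : ℂ) ^ (s - 1) * cexp (-(w * t)))
    (fun w hw ↦
      (differentiableAt_integral_ofReal_cpow_mul_cexp_neg_mul_Ioi hs hw).differentiableWithinAt)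
    (fun w hw ↦ ((differentiableAt_id.cpow_const (Or.inl hw)).const_mul _).differentiableWithinAt)
    (fun r hr ↦ ?_) ha
  rw [integral_cpow_mul_exp_neg_mul_Ioi hs hr, mul_comm, one_div,
    inv_cpow _ _ (by simpa [arg_ofReal_of_nonneg hr.le] using pi_ne_zero.symm), cpow_neg, id]

end GammaIntegral

lemma mul_cpow_of_arg_add_mem_Ioc {x y : ℂ} (hx : x ≠ 0) (hy : y ≠ 0)
    (h : x.arg + y.arg ∈ Ioc (-π) π) (c : ℂ) : (x * y) ^ c = x ^ c * y ^ c := by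
  rw [cpow_def_of_ne_zero (mul_ne_zero hx hy), cpow_def_of_ne_zero hx, cpow_def_of_ne_zero hy,
    log_mul hx hy h, add_mul, Complex.exp_add]

lemma cpow_two_pi_mul_neg_I_mul {w : ℂ} (hw : 0 < w.im) (c : ℂ) :
    (2 * π * (-I * w)) ^ c = (2 * π) ^ c * cexp (-(π / 2 * I * c)) * w ^ c := by
  have hw0 : w ≠ 0 := fun h ↦ by simp [h] at hw
  have harg : 0 < w.arg := by
    rcases (arg_nonneg_iff.mpr hw.le).lt_or_eq with h | h
    · exact h
    · exact absurd (arg_eq_zero_iff.mp h.symm).2 hw.ne'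
  have h2π : (2 * π : ℂ) = ((2 * π : ℝ) : ℂ) := by push_cast; rfl
  rw [h2π, mul_cpow_of_arg_add_mem_Ioc (by exact_mod_cast two_pi_pos.ne') (by simpa using hw0)
      (by rw [arg_ofReal_of_nonneg two_pi_pos.le, zero_add]; exact arg_mem_Ioc _),
    mul_cpow_of_arg_add_mem_Ioc (by simp) hw0
      (by rw [arg_neg_I]; constructor <;> linarith [arg_le_pi w, pi_pos]),
    cpow_def_of_ne_zero (by simp : -I ≠ 0), log_neg_I]
  ring_nf

lemma norm_cpow_le_rpow_mul_exp (w c : ℂ) :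
    ‖w ^ c‖ ≤ ‖w‖ ^ c.re * rexp (π * |c.im|) := by
  refine (norm_cpow_le w c).trans ?_
  rw [div_eq_mul_inv, ← Real.exp_neg]
  gcongr
  calc -(w.arg * c.im) ≤ |w.arg| * |c.im| := by rw [← abs_mul]; exact neg_le_abs _
    _ ≤ π * |c.im| := by gcongr; exact abs_arg_le_pi w

lemma summable_int_add_cpow_neg (z : ℂ) {s : ℂ} (hs : 1 < s.re) :
    Summable fun n : ℤ ↦ (z + n) ^ (-s) := by
  have hΘ : (fun n : ℤ ↦ ‖z + n‖) =Θ[cofinite] fun n ↦ |(n : ℝ)| := by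
    simpa [add_comm z] using
      (EisensteinSeries.linear_isTheta_right_add 1 0 z).norm_left.norm_right
  have hrpow := hΘ.rpow (r := -s.re) (.of_forall fun _ ↦ norm_nonneg _)
    (.of_forall fun _ ↦ abs_nonneg _)
  refine summable_of_isBigO (Real.summable_abs_int_rpow hs) ?_
  refine (IsBigO.of_bound (rexp (π * |s.im|)) (.of_forall fun n ↦ ?_)).trans hrpow.isBigO
  rw [Real.norm_of_nonneg (rpow_nonneg (norm_nonneg _) _), mul_comm]
  simpa using norm_cpow_le_rpow_mul_exp (z + n) (-s)

noncomputable def lipschitzKernel (s z : ℂ) : ℝ → ℂ :=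
  indicator (Ioi 0) fun t ↦ (t : ℂ) ^ (s - 1) * cexp (2 * π * I * z * t)

section LipschitzKernel

variable {s z : ℂ}

-- in the shape `t ^ (s - 1) * e^(-a t)` of the Gamma integrals
lemma lipschitzKernel_of_pos {t : ℝ} (ht : 0 < t) :
    lipschitzKernel s z t = (t : ℂ) ^ (s - 1) * cexp (-(-(2 * π * I * z) * t)) := by
  rw [lipschitzKernel, indicator_of_mem (mem_Ioi.mpr ht), neg_mul, neg_neg]

lemma lipschitzKernel_of_nonpos {t : ℝ} (ht : t ≤ 0) : lipschitzKernel s z t = 0 :=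
  indicator_of_notMem (by simpa using ht) _

lemma continuous_lipschitzKernel (hs : 1 < s.re) : Continuous (lipschitzKernel s z) := by
  have hmax : lipschitzKernel s z =
      fun t ↦ ((max t 0 : ℝ) : ℂ) ^ (s - 1) * cexp (2 * π * I * z * t) := by
    funext t
    rcases le_or_gt t 0 with ht | ht
    · rw [lipschitzKernel_of_nonpos ht, max_eq_right ht, ofReal_zero,
        zero_cpow (fun h ↦ by simp [sub_eq_zero.mp h] at hs), zero_mul]
    · rw [lipschitzKernel, indicator_of_mem (mem_Ioi.mpr ht), max_eq_left ht.le]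
  rw [hmax]
  refine Continuous.mul ?_ (by fun_prop)
  exact continuous_iff_continuousAt.mpr fun t ↦
    (continuousAt_ofReal_cpow_const _ _ (Or.inl (by rw [sub_re, one_re]; linarith))).comp
      (continuous_id.max continuous_const).continuousAt

lemma lipschitzKernel_isBigO_rpow (hz : 0 < z.im) (b : ℝ) :
    lipschitzKernel s z =O[cocompact ℝ] fun x ↦ |x| ^ (-b) := by
  rw [cocompact_eq_atBot_atTop, isBigO_sup]
  constructor
  · refine (isBigO_zero _ _).congr' ?_ EventuallyEq.rfl
    filter_upwards [eventually_le_atBot 0] with t ht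
    exact (lipschitzKernel_of_nonpos ht).symm
  · have hc : 0 < 2 * π * z.im := by positivity
    have hdecay := (isBigO_refl (fun t : ℝ ↦ t ^ (s.re - 1)) atTop).mul
      (isLittleO_exp_neg_mul_rpow_atTop hc (-b - (s.re - 1))).isBigO
    refine isBigO_norm_left.mp (hdecay.congr' ?_ ?_)
    · filter_upwards [eventually_gt_atTop 0] with t ht
      rw [lipschitzKernel_of_pos ht, norm_ofReal_cpow_mul_cexp_neg_mul ht]
      simp [mul_re, mul_comm]
    · filter_upwards [eventually_gt_atTop 0] with t ht
      rw [← rpow_add ht, abs_of_pos ht]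
      ring_nf

lemma fourier_lipschitzKernel (hs : 0 < s.re) (hz : 0 < z.im) (ξ : ℝ) :
    𝓕 (lipschitzKernel s z) ξ
      = Gamma s * (2 * π) ^ (-s) * cexp (I * π * s / 2) * (z - ξ) ^ (-s) := by
  set a : ℂ := 2 * π * (-I * (z - ξ))
  have ha : 0 < a.re := by
    have : a.re = 2 * π * z.im := by simp [a]
    rw [this]
    positivity
  have hintegrand : ∀ v : ℝ,
      cexp (((-2 * π * v * ξ : ℝ) : ℂ) * I) • lipschitzKernel s z v
        = indicator (Ioi 0) (fun t : ℝ ↦ (t : ℂ) ^ (s - 1) * cexp (-(a * t))) v := by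
    intro v
    by_cases hv : v ∈ Ioi 0
    · rw [lipschitzKernel, indicator_of_mem hv, indicator_of_mem hv, smul_eq_mul,
        mul_left_comm, ← Complex.exp_add]
      congr 2
      push_cast [a]
      ring
    · rw [lipschitzKernel, indicator_of_notMem hv, indicator_of_notMem hv, smul_zero]
  rw [Real.fourier_real_eq_integral_exp_smul]
  simp_rw [hintegrand]
  rw [integral_indicator measurableSet_Ioi, integral_ofReal_cpow_mul_cexp_neg_mul_Ioi hs ha,
    cpow_two_pi_mul_neg_I_mul (by simpa using hz) (-s)]
  ring_nf

lemma tsum_int_lipschitzKernel :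
    ∑' n : ℤ, lipschitzKernel s z n
      = ∑' n : ℕ, ((n : ℂ) + 1) ^ (s - 1) * cexp (2 * π * I * ((n : ℂ) + 1) * z) := by
  have hinj : Function.Injective fun n : ℕ ↦ (n : ℤ) + 1 := fun m n h ↦ by simpa using h
  have hsupp : (Function.support fun n : ℤ ↦ lipschitzKernel s z n) ⊆
      range fun n : ℕ ↦ (n : ℤ) + 1 := by
    intro n hn
    have hpos : 0 < n := by
      by_contra h
      exact hn (lipschitzKernel_of_nonpos (by exact_mod_cast not_lt.mp h))
    exact ⟨(n - 1).toNat, show ((n - 1).toNat : ℤ) + 1 = n by omega⟩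
  rw [← hinj.tsum_eq hsupp]
  refine tsum_congr fun n ↦ ?_
  rw [lipschitzKernel, indicator_of_mem (mem_Ioi.mpr (by push_cast; positivity))]
  push_cast
  ring_nf

end LipschitzKernel

theorem lipschitz_summation_formula (s : ℂ) (hs : 1 < s.re) (z : ℂ) (hz : 0 < z.im) :
    ∑' n : ℕ, ((n : ℂ) + 1) ^ (s - 1) * Complex.exp (2 * π * Complex.I * ((n : ℂ) + 1) * z)
      = Complex.Gamma s * (2 * π : ℂ) ^ (-s) * Complex.exp (Complex.I * π * s / 2) *
          ∑' n : ℤ, ((z + (n : ℂ)) ^ s)⁻¹ := by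
  have hF := fourier_lipschitzKernel (s := s) (by linarith) hz
  have hsum : Summable fun n : ℤ ↦ 𝓕 (lipschitzKernel s z) n := by
    refine (((summable_int_add_cpow_neg z hs).comp_injective neg_injective).mul_left
      (Gamma s * (2 * π) ^ (-s) * cexp (I * π * s / 2))).congr fun n ↦ ?_
    rw [hF]
    simp [sub_eq_add_neg]
  have hpoisson := Real.tsum_eq_tsum_fourier_of_rpow_decay_of_summable
    (continuous_lipschitzKernel hs) one_lt_two (lipschitzKernel_isBigO_rpow hz 2) hsum 0
  simp only [zero_add, QuotientAddGroup.mk_zero, fourier_eval_zero, mul_one] at hpoisson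
  rw [← tsum_int_lipschitzKernel, hpoisson]
  simp_rw [hF, tsum_mul_left, ← cpow_neg]
  congr 1
  rw [← (Equiv.neg ℤ).tsum_eq fun n : ℤ ↦ (z + n) ^ (-s)]
  simp [sub_eq_add_neg]
end

section
/- For real a > 0 and real t with t ≤ a − 1/3, one has ∫_t^∞ x^{a−1} e^{−x} dx > (1/2)·Γ(a). -/
/-!
Substituting `x = y³` turns the Gamma(a) integrand into `3 exp(3μ³ log y - y³)`, where
`μ³ = a - 1/3`. For `0 < y < μ` this is strictly smaller at `y` than at its reflection `2μ - y`:
with `v = (μ - y)/μ` this reduces to `log ((1 + v)/(1 - v)) > 2v + 2v³/3`, the first two terms of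
the artanh series. Reflecting about `μ`, the mass on `(0, μ)` is less than the mass on `(μ, 2μ)`,
so the mass beyond `μ³ = a - 1/3` exceeds `Γ(a)/2`.
-/

open Real MeasureTheory Set

lemma two_mul_add_lt_log_sub_log {v : ℝ} (h0 : 0 < v) (h1 : v < 1) :
    2 * v + 2 / 3 * v ^ 3 < log (1 + v) - log (1 - v) := by
  have hsum := hasSum_log_sub_log_of_abs_lt_one (abs_lt.2 ⟨by linarith, h1⟩)
  calc 2 * v + 2 / 3 * v ^ 3
      < ∑ k ∈ Finset.range 3, 2 * (1 / (2 * (k : ℝ) + 1)) * v ^ (2 * k + 1) := by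
        simp only [Finset.sum_range_succ, Finset.sum_range_zero]
        norm_num
        positivity
    _ ≤ log (1 + v) - log (1 - v) := sum_le_hasSum _ (fun k _ => by positivity) hsum

-- With `w = 2μ - y` and `v = (μ - y) / μ`: `w / y = (1 + v) / (1 - v)` and
-- `w³ - y³ = 3μ³ (2v + 2v³/3)`.
lemma mul_log_sub_cube_lt_of_reflect {μ y : ℝ} (hy : 0 < y) (hyμ : y < μ) :
    3 * μ ^ 3 * log y - y ^ 3 < 3 * μ ^ 3 * log (2 * μ - y) - (2 * μ - y) ^ 3 := by
  have hμ : 0 < μ := hy.trans hyμ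
  set v := (μ - y) / μ with hv
  have hlog := two_mul_add_lt_log_sub_log (v := v) (div_pos (by linarith) hμ)
    ((div_lt_one hμ).2 (by linarith))
  have h1v : 1 + v = (2 * μ - y) / μ := by rw [hv]; field_simp; ring
  have h2v : 1 - v = y / μ := by rw [hv]; field_simp; ring
  rw [h1v, h2v, log_div (by linarith) hμ.ne', log_div hy.ne' hμ.ne'] at hlog
  have hcube : (2 * μ - y) ^ 3 - y ^ 3 = 3 * μ ^ 3 * (2 * v + 2 / 3 * v ^ 3) := by
    rw [hv]; field_simp; ring
  nlinarith [mul_lt_mul_of_pos_left hlog (by positivity : (0 : ℝ) < 3 * μ ^ 3)]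

lemma integral_lt_integral_of_lt_reflect {g : ℝ → ℝ} {a c : ℝ} (hac : a < c)
    (hg : IntervalIntegrable g volume a (2 * c - a))
    (hlt : ∀ y ∈ Ioo a c, g y < g (2 * c - y)) :
    ∫ y in a..c, g y < ∫ y in c..(2 * c - a), g y := by
  have hca : c ∈ uIcc a (2 * c - a) := by
    rw [uIcc_of_le (by linarith)]; constructor <;> linarith
  have hleft : IntervalIntegrable g volume a c := hg.mono_set (uIcc_subset_uIcc_left hca)
  have hright : IntervalIntegrable (fun y => g (2 * c - y)) volume a c := by
    simpa [two_mul] using ((hg.mono_set (uIcc_subset_uIcc_right hca)).comp_sub_left (2 * c)).symm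
  have hpos : 0 < ∫ y in a..c, (g (2 * c - y) - g y) :=
    intervalIntegral.intervalIntegral_pos_of_pos_on (hright.sub hleft)
      (fun y hy => sub_pos.2 (hlt y hy)) hac
  rw [intervalIntegral.integral_sub hright hleft, intervalIntegral.integral_comp_sub_left,
    show 2 * c - c = c by ring] at hpos
  linarith

lemma setIntegral_mono_set_of_nonneg {α : Type*} [MeasurableSpace α] {μ : Measure α}
    {f : α → ℝ} {s t : Set α} (ht : MeasurableSet t) (hf : IntegrableOn f t μ)
    (hf0 : ∀ x ∈ t, 0 ≤ f x) (hst : s ⊆ t) : ∫ x in s, f x ∂μ ≤ ∫ x in t, f x ∂μ :=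
  setIntegral_mono_set hf ((ae_restrict_iff' ht).2 (.of_forall hf0)) hst.eventuallyLE

/-- `y ↦ 3y² · e^{-y³} (y³)^{a-1}`, in the shape produced by `integral_comp_rpow_Ioi_of_pos`. -/
noncomputable def cubeGammaIntegrand (a y : ℝ) : ℝ :=
  (3 * y ^ ((3 : ℝ) - 1)) • (exp (-y ^ (3 : ℝ)) * (y ^ (3 : ℝ)) ^ (a - 1))

lemma integral_cubeGammaIntegrand_Ioi_zero {a : ℝ} (ha : 0 < a) :
    ∫ y in Ioi 0, cubeGammaIntegrand a y = Gamma a := by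
  rw [Gamma_eq_integral ha]
  exact integral_comp_rpow_Ioi_of_pos (g := fun x => exp (-x) * x ^ (a - 1)) three_pos

lemma integral_cubeGammaIntegrand_Ioi (a : ℝ) {μ : ℝ} (hμ : 0 ≤ μ) :
    ∫ y in Ioi μ, cubeGammaIntegrand a y = ∫ x in Ioi (μ ^ 3), exp (-x) * x ^ (a - 1) := by
  have h := integral_comp_rpow_Ioi_of_pos' (g := fun x => exp (-x) * x ^ (a - 1)) three_pos
    (pow_nonneg hμ 3)
  rwa [show (3 : ℝ)⁻¹ = ((3 : ℕ) : ℝ)⁻¹ by norm_num, pow_rpow_inv_natCast hμ three_ne_zero] at h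

lemma integrableOn_cubeGammaIntegrand {a : ℝ} (ha : 0 < a) :
    IntegrableOn (cubeGammaIntegrand a) (Ioi 0) := by
  have h := (integrableOn_Ioi_comp_rpow_iff _ three_ne_zero).2 (GammaIntegral_convergent ha)
  rwa [abs_of_pos three_pos] at h

lemma cubeGammaIntegrand_eq_exp (a : ℝ) {y : ℝ} (hy : 0 < y) :
    cubeGammaIntegrand a y = 3 * exp ((3 * a - 1) * log y - y ^ 3) := by
  have hcube : y ^ (3 : ℝ) = y ^ 3 := by exact_mod_cast rpow_natCast y 3
  rw [cubeGammaIntegrand, smul_eq_mul, hcube, rpow_def_of_pos hy,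
    rpow_def_of_pos (pow_pos hy 3), log_pow, mul_assoc, ← exp_add, ← exp_add]
  congr 2
  push_cast
  ring

lemma cubeGammaIntegrand_lt_of_reflect {a μ y : ℝ} (hμ : 3 * a - 1 = 3 * μ ^ 3) (hy : 0 < y)
    (hyμ : y < μ) : cubeGammaIntegrand a y < cubeGammaIntegrand a (2 * μ - y) := by
  rw [cubeGammaIntegrand_eq_exp a hy, cubeGammaIntegrand_eq_exp a (by linarith), hμ]
  exact mul_lt_mul_of_pos_left (exp_lt_exp.2 (mul_log_sub_cube_lt_of_reflect hy hyμ)) three_pos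

theorem Gamma_div_two_lt_integral_Ioi_sub_one_third {a : ℝ} (h : 0 < a - 1 / 3) :
    Gamma a / 2 < ∫ x in Ioi (a - 1 / 3), exp (-x) * x ^ (a - 1) := by
  have ha : 0 < a := by linarith
  obtain ⟨μ, hμ, hμ3⟩ : ∃ μ : ℝ, 0 < μ ∧ μ ^ 3 = a - 1 / 3 :=
    ⟨_, rpow_pos_of_pos h _, rpow_inv_natCast_pow h.le three_ne_zero⟩
  have hint := integrableOn_cubeGammaIntegrand ha
  have hsplit := intervalIntegral.integral_interval_add_Ioi hint
    (hint.mono_set (Ioi_subset_Ioi hμ.le))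
  have hreflect := integral_lt_integral_of_lt_reflect hμ
    ((intervalIntegrable_iff_integrableOn_Ioc_of_le (by linarith)).2
      (hint.mono_set Ioc_subset_Ioi_self))
    (fun y hy => cubeGammaIntegrand_lt_of_reflect (by linarith) hy.1 hy.2)
  rw [sub_zero] at hreflect
  have htail : ∫ y in μ..2 * μ, cubeGammaIntegrand a y ≤ ∫ y in Ioi μ, cubeGammaIntegrand a y := by
    rw [intervalIntegral.integral_of_le (by linarith)]
    exact setIntegral_mono_set_of_nonneg measurableSet_Ioi (hint.mono_set (Ioi_subset_Ioi hμ.le))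
      (fun y hy => by rw [cubeGammaIntegrand_eq_exp a (hμ.trans hy)]; positivity)
      Ioc_subset_Ioi_self
  rw [← hμ3, ← integral_cubeGammaIntegrand_Ioi a hμ.le, ← integral_cubeGammaIntegrand_Ioi_zero ha,
    ← hsplit]
  linarith

theorem gamma_tail_gt_half (a : ℝ) (ha : 0 < a) (t : ℝ) (ht : t ≤ a - 1 / 3) :
    Real.Gamma a / 2 < ∫ x in Set.Ioi t ∩ Set.Ioi 0, x ^ (a - 1) * Real.exp (-x) := by
  simp_rw [mul_comm _ (exp _)]
  rcases le_or_gt t 0 with ht0 | ht0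
  · rw [inter_eq_right.2 (Ioi_subset_Ioi ht0), ← Gamma_eq_integral ha]
    linarith [Gamma_pos_of_pos ha]
  · rw [inter_eq_left.2 (Ioi_subset_Ioi ht0.le)]
    refine (Gamma_div_two_lt_integral_Ioi_sub_one_third (ht0.trans_le ht)).trans_le ?_
    refine setIntegral_mono_set_of_nonneg measurableSet_Ioi
      ((GammaIntegral_convergent ha).mono_set (Ioi_subset_Ioi ht0.le))
      (fun x hx => ?_) (Ioi_subset_Ioi ht)
    have : 0 < x := ht0.trans hx
    positivity
end

section
/- For every s ∈ ℂ, lim_{n→∞} Γ(n + s) / ((n−1)! · n^s) = 1. -/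
/-!
Off the poles, `Γ(s + n + 1) = Γ(s) · s(s + 1)⋯(s + n)`, so `gammaRatio s (n + 1)` equals
`Γ(s) / GammaSeq s n · (n / (n + 1)) ^ s`, which tends to `1` by Euler's limit formula
`GammaSeq s n → Γ(s)`. The functional equation gives
`gammaRatio (s + 1) n = (n + s) / n · gammaRatio s n`, so the limit for `s` follows from the limit
for `s + m`, and `s + m` is off the poles for `m` large.
-/

open Complex Filter Finset
open scoped Nat Topology

theorem ascPochhammer_eval_eq_prod_range {R : Type*} [CommSemiring R] (n : ℕ) (r : R) :
    (ascPochhammer R n).eval r = ∏ j ∈ range n, (r + j) := by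
  induction n with
  | zero => simp
  | succ n ih => simp [ascPochhammer_succ_right, ih, prod_range_succ]

namespace Complex

theorem Gamma_add_nat_eq_mul_prod {s : ℂ} (hs : ∀ m : ℕ, s ≠ -m) (n : ℕ) :
    Gamma (s + n) = Gamma s * ∏ j ∈ range n, (s + j) := by
  rw [← ascPochhammer_eval_eq_prod_range, ← Gamma_add_nat_div_Gamma_eq s hs,
    mul_div_cancel₀ _ (Gamma_ne_zero hs)]

theorem tendsto_natCast_cpow_div_add_cpow {x : ℝ} (hx : 0 ≤ x) (s : ℂ) :
    Tendsto (fun n : ℕ => (n : ℂ) ^ s / ((n : ℂ) + x) ^ s) atTop (𝓝 1) := by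
  have hcont : ContinuousAt (· ^ s) (1 : ℂ) := continuousAt_cpow_const (by simp)
  have := hcont.tendsto.comp (tendsto_natCast_div_add_atTop (x : ℂ))
  rw [one_cpow] at this
  refine this.congr fun n => ?_
  have hn : (n : ℂ) = ((n : ℝ) : ℂ) := (ofReal_natCast n).symm
  rw [Function.comp_apply, hn, ← ofReal_add, div_cpow_ofReal_nonneg n.cast_nonneg (by positivity)]

end Complex

noncomputable def gammaRatio (s : ℂ) (n : ℕ) : ℂ :=
  Gamma (n + s) / ((n - 1)! * (n : ℂ) ^ s)

theorem gammaRatio_add_one {s : ℂ} {n : ℕ} (hn : n ≠ 0) (hns : (n : ℂ) + s ≠ 0) :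
    gammaRatio (s + 1) n = (n + s) / n * gammaRatio s n := by
  have hn' : (n : ℂ) ≠ 0 := Nat.cast_ne_zero.mpr hn
  rw [gammaRatio, gammaRatio, ← add_assoc, Gamma_add_one _ hns, cpow_add _ _ hn', cpow_one]
  field_simp

theorem gammaRatio_succ_eq {s : ℂ} (hs : ∀ m : ℕ, s ≠ -m) {n : ℕ} (hn : n ≠ 0) :
    gammaRatio s (n + 1) = Gamma s / GammaSeq s n * ((n : ℂ) ^ s / ((n : ℂ) + 1) ^ s) := by
  have hpow : (n : ℂ) ^ s ≠ 0 := by simp [cpow_eq_zero_iff, hn]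
  rw [gammaRatio, GammaSeq, Nat.add_sub_cancel, add_comm _ s, Gamma_add_nat_eq_mul_prod hs,
    Nat.cast_succ]
  field_simp

theorem tendsto_gammaRatio_of_ne_neg_nat {s : ℂ} (hs : ∀ m : ℕ, s ≠ -m) :
    Tendsto (gammaRatio s) atTop (𝓝 1) := by
  rw [← tendsto_add_atTop_iff_nat 1]
  have hquot : Tendsto (fun n => Gamma s / GammaSeq s n) atTop (𝓝 1) := by
    have := (tendsto_const_nhds (x := Gamma s)).div (GammaSeq_tendsto_Gamma s) (Gamma_ne_zero hs)
    rwa [div_self (Gamma_ne_zero hs)] at this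
  have hcpow := tendsto_natCast_cpow_div_add_cpow zero_le_one s
  rw [ofReal_one] at hcpow
  have hlim := hquot.mul hcpow
  rw [mul_one] at hlim
  refine hlim.congr' ?_
  filter_upwards [eventually_ne_atTop 0] with n hn
  exact (gammaRatio_succ_eq hs hn).symm

theorem tendsto_gammaRatio_of_add_one {s : ℂ} (h : Tendsto (gammaRatio (s + 1)) atTop (𝓝 1)) :
    Tendsto (gammaRatio s) atTop (𝓝 1) := by
  have hlim := (tendsto_natCast_div_add_atTop s).mul h
  rw [mul_one] at hlim
  refine hlim.congr' ?_
  filter_upwards [eventually_ne_atTop 0,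
    (tendsto_natCast_atTop_atTop (R := ℝ)).eventually_gt_atTop (-s.re)] with n hn hns
  have hns' : (n : ℂ) + s ≠ 0 := fun h0 => by
    have := congrArg re h0
    simp only [add_re, natCast_re, zero_re] at this
    linarith
  rw [gammaRatio_add_one hn hns']
  field_simp

theorem tendsto_gammaRatio_of_add_nat {s : ℂ} (m : ℕ)
    (h : Tendsto (gammaRatio (s + m)) atTop (𝓝 1)) : Tendsto (gammaRatio s) atTop (𝓝 1) := by
  induction m generalizing s with
  | zero => simpa using h
  | succ m ih =>
    refine tendsto_gammaRatio_of_add_one (ih ?_)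
    rwa [add_assoc, add_comm 1, ← Nat.cast_succ]

theorem gamma_ratio_tendsto_one (s : ℂ) :
    Tendsto (fun n : ℕ =>
        Complex.Gamma ((n : ℂ) + s) / (((n - 1).factorial : ℂ) * (n : ℂ) ^ s))
      atTop (nhds 1) := by
  obtain ⟨m, hm⟩ := exists_nat_gt (-s.re)
  refine tendsto_gammaRatio_of_add_nat m (tendsto_gammaRatio_of_ne_neg_nat fun k hk => ?_)
  have := congrArg re hk
  simp only [add_re, natCast_re, neg_re] at this
  linarith [k.cast_nonneg (α := ℝ)]
end

section
/- Let G be a second-countable, locally compact Hausdorff, unimodular group with Haar measure μ_G, Γ a discrete subgroup, Λ ≤ Γ, and χ : Γ → ℂ× a unitary character. Let φ : G → ℂ be measurable with φ(λg) = χ(λ)φ(g) for all λ ∈ Λ, g ∈ G, and |φ| ∈ L¹(Λ\G). Then the Poincaré series (P φ)(g) := ∑_{γ ∈ Λ\Γ} conj(χ(γ)) φ(γg) converges absolutely for almost every g ∈ G, satisfies (P φ)(γ·) = χ(γ)·(P φ) for all γ ∈ Γ, and |P φ| ∈ L¹(Γ\G). -/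
/-!
Unfolding. Writing `Γ = Λ × (Λ\Γ)` via `(λ, q) ↦ λ q.out`, the translates `λ q.out FΓ` tile `G`,
so by `Λ`-invariance of `|φ|` the integral of `|φ|` over `FΛ` equals
`∫_{FΓ} ∑_q |φ(q.out g)| dμ`. This is finite, so the series of absolute values converges a.e. on
`FΓ`; right multiplication by `γ ∈ Γ` permutes `Λ\Γ` and the terms only pick up unimodular factors,
so the convergence set is `Γ`-invariant and hence of full measure in `G`. The same reindexing gives
the transformation law, and `|Pφ| ≤ ∑_q |φ(q.out ·)|` gives integrability over `FΓ`.
-/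

open MeasureTheory Pointwise QuotientGroup ComplexConjugate
open scoped ENNReal

section RightCosets

variable {K : Type*} [Group K] (H : Subgroup K)

noncomputable def Subgroup.prodQuotientRightRelEquiv : H × Quotient (rightRel H) ≃ K :=
  ((Equiv.refl H).prodCongr (Equiv.ofInjective _ Quotient.out_injective)).trans
    (Subgroup.isComplement_range_right (f := Quotient.out) Quotient.out_eq').equiv.symm

namespace QuotientGroup

def rightRelMulRight (γ : K) : Quotient (rightRel H) ≃ Quotient (rightRel H) :=
  Quotient.congr (Equiv.mulRight γ) fun a b => by
    simp only [rightRel_apply, Equiv.coe_mulRight, mul_inv_rev, mul_assoc, mul_inv_cancel_left]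

theorem out_mul_mul_inv_out_rightRelMulRight_mem (γ : K)
    (q : Quotient (rightRel H)) : q.out * γ * (rightRelMulRight H γ q).out⁻¹ ∈ H := by
  have hq : rightRelMulRight H γ q = Quotient.mk _ (q.out * γ) := by
    conv_lhs => rw [← q.out_eq]
    rfl
  rw [hq]
  exact rightRel_apply.mp (Quotient.mk_out _)

variable {H} {β : Type*} {T : K → β}

theorem apply_out_mul_eq_apply_out_rightRelMulRight (hT : ∀ h ∈ H, ∀ x, T (h * x) = T x)
    (γ : K) (q : Quotient (rightRel H)) : T (q.out * γ) = T (rightRelMulRight H γ q).out := by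
  rw [← hT _ (out_mul_mul_inv_out_rightRelMulRight_mem H γ q) (rightRelMulRight H γ q).out,
    inv_mul_cancel_right]

variable [AddCommMonoid β] [TopologicalSpace β]

theorem summable_out_mul_iff (hT : ∀ h ∈ H, ∀ x, T (h * x) = T x) (γ : K) :
    Summable (fun q : Quotient (rightRel H) => T (q.out * γ)) ↔
      Summable (fun q : Quotient (rightRel H) => T q.out) := by
  simp only [apply_out_mul_eq_apply_out_rightRelMulRight hT γ]
  exact (rightRelMulRight H γ).summable_iff (f := fun q => T q.out)

theorem tsum_out_mul (hT : ∀ h ∈ H, ∀ x, T (h * x) = T x) (γ : K) :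
    ∑' q : Quotient (rightRel H), T (q.out * γ) = ∑' q : Quotient (rightRel H), T q.out := by
  simp only [apply_out_mul_eq_apply_out_rightRelMulRight hT γ]
  exact (rightRelMulRight H γ).tsum_eq (fun q => T q.out)

end QuotientGroup

end RightCosets

namespace MeasureTheory

namespace IsFundamentalDomain

variable {K α : Type*} [Group K] [MulAction K α] [MeasurableSpace α] {μ : Measure α}

theorem of_subgroupOf {Λ Γ : Subgroup K} (hΛΓ : Λ ≤ Γ) {s : Set α}
    (hs : IsFundamentalDomain Λ s μ) : IsFundamentalDomain (Λ.subgroupOf Γ) s μ :=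
  hs.preimage_of_equiv (f := id) (Measure.QuasiMeasurePreserving.id μ)
    (Subgroup.subgroupOfEquivOfLe hΛΓ).symm.bijective fun _ _ => rfl

variable [Countable K] [MeasurableConstSMul K α] [SMulInvariantMeasure K α μ]

theorem setLIntegral_eq_tsum_quotient {H : Subgroup K} {s t : Set α}
    (hs : IsFundamentalDomain H s μ) (ht : IsFundamentalDomain K t μ) {f : α → ℝ≥0∞}
    (hf : ∀ h ∈ H, ∀ x, f (h • x) = f x) :
    ∫⁻ x in s, f x ∂μ = ∑' q : Quotient (rightRel H), ∫⁻ x in t, f (q.out • x) ∂μ := by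
  have hcoset (q : Quotient (rightRel H)) :
      ∫⁻ x in t, f (q.out • x) ∂μ = ∑' h : H, ∫⁻ x in s ∩ (h * q.out) • t, f x ∂μ := by
    rw [(measurePreserving_smul q.out μ).setLIntegral_comp_emb (measurableEmbedding_const_smul _),
      hs.setLIntegral_eq_tsum']
    refine tsum_congr fun h => ?_
    have hf' (x : α) : f (h⁻¹ • x) = f x := hf _ (h⁻¹).2 x
    simp only [hf', Set.image_smul, Set.inter_comm s]
    rw [← smul_smul]
    rfl
  calc ∫⁻ x in s, f x ∂μ = ∑' γ : K, ∫⁻ x in s ∩ γ • t, f x ∂μ := ht.setLIntegral_eq_tsum f s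
    _ = ∑' p : H × Quotient (rightRel H), ∫⁻ x in s ∩ (p.1 * p.2.out) • t, f x ∂μ :=
      (H.prodQuotientRightRelEquiv.tsum_eq (fun γ => ∫⁻ x in s ∩ γ • t, f x ∂μ)).symm
    _ = _ := by
      rw [ENNReal.tsum_prod', ENNReal.tsum_comm]
      exact tsum_congr fun q => (hcoset q).symm

theorem ae_of_ae_restrict {s : Set α} (hs : IsFundamentalDomain K s μ) {p : α → Prop}
    (hp : ∀ (g : K) x, p (g • x) ↔ p x) (h : ∀ᵐ x ∂μ.restrict s, p x) : ∀ᵐ x ∂μ, p x := by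
  refine ae_iff.mpr (hs.measure_zero_of_invariant _ (fun g => ?_) ?_)
  · ext x
    simp only [Set.mem_smul_set_iff_inv_smul_mem, Set.mem_ofPred_eq, hp]
  · rw [← Measure.restrict_apply₀' hs.nullMeasurableSet]
    exact ae_iff.mp h

end IsFundamentalDomain

variable {α E ι : Type*} [MeasurableSpace α] {μ : Measure α} [NormedAddCommGroup E]
  [Countable ι] {f : ι → α → E}

theorem aestronglyMeasurable_tsum (hf : ∀ i, AEStronglyMeasurable (f i) μ)
    (hsum : ∀ᵐ x ∂μ, Summable fun i => f i x) :
    AEStronglyMeasurable (fun x => ∑' i, f i x) μ :=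
  aestronglyMeasurable_of_tendsto_ae Filter.atTop
    (fun s => Finset.aestronglyMeasurable_fun_sum s fun i _ => hf i)
    (hsum.mono fun _ hx => hx.hasSum)

theorem ae_summable_norm_of_lintegral_tsum_enorm_ne_top
    (hf : ∀ i, AEMeasurable (fun x => ‖f i x‖ₑ) μ) (hfin : ∫⁻ x, ∑' i, ‖f i x‖ₑ ∂μ ≠ ⊤) :
    ∀ᵐ x ∂μ, Summable fun i => ‖f i x‖ :=
  (ae_lt_top' (AEMeasurable.tsum hf) hfin).mono fun _ hx =>
    tsum_enorm_ne_top_iff_summable_norm.mp hx.ne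

theorem integrable_tsum_of_lintegral_tsum_enorm_ne_top [CompleteSpace E]
    (hf : ∀ i, AEStronglyMeasurable (f i) μ) (hfin : ∫⁻ x, ∑' i, ‖f i x‖ₑ ∂μ ≠ ⊤) :
    Integrable (fun x => ∑' i, f i x) μ :=
  ⟨aestronglyMeasurable_tsum hf <|
      (ae_summable_norm_of_lintegral_tsum_enorm_ne_top (fun i => (hf i).enorm) hfin).mono
        fun _ hx => hx.of_norm,
    (lintegral_mono fun _ => enorm_tsum_le_tsum_enorm).trans_lt hfin.lt_top⟩

end MeasureTheory

section PoincareSeries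

variable {G : Type*} [Group G] {Γ Λ : Subgroup G} (hΛΓ : Λ ≤ Γ) {χ : Γ →* ℂ}
  (hχ : ∀ γ : Γ, ‖χ γ‖ = 1) {φ : G → ℂ}
  (hφeq : ∀ (lam : Λ) (g : G), φ ((lam : G) * g) = χ ⟨(lam : G), hΛΓ lam.2⟩ * φ g)
include hχ hφeq

theorem nnnorm_apply_mul_of_mem {lam : G} (hlam : lam ∈ Λ) (g : G) : ‖φ (lam * g)‖₊ = ‖φ g‖₊ := by
  rw [hφeq ⟨lam, hlam⟩ g, nnnorm_mul, show ‖χ _‖₊ = 1 from NNReal.eq (hχ _), one_mul]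

theorem conj_mul_apply_mul_of_mem {h : Γ} (hh : h ∈ Λ.subgroupOf Γ) (x : Γ) (g : G) :
    conj (χ (h * x)) * φ (↑(h * x) * g) = conj (χ x) * φ (x * g) := by
  have hunit : conj (χ h) * χ h = 1 := by rw [Complex.conj_mul', hχ]; norm_num
  have hφh : φ (h * (x * g)) = χ h * φ (x * g) := hφeq ⟨h, hh⟩ (x * g)
  rw [map_mul, map_mul, Subgroup.coe_mul, mul_assoc (h : G), hφh]
  linear_combination (conj (χ x) * φ (x * g)) * hunit

theorem summable_norm_apply_out_mul_iff (γ : Γ) (g : G) :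
    Summable (fun q : Quotient (rightRel (Λ.subgroupOf Γ)) => ‖φ (q.out * (γ * g))‖) ↔
      Summable (fun q : Quotient (rightRel (Λ.subgroupOf Γ)) => ‖φ (q.out * g)‖) := by
  simp only [← mul_assoc, ← Subgroup.coe_mul]
  refine summable_out_mul_iff (T := fun x : Γ => ‖φ (x * g)‖) (fun h hh x => ?_) γ
  simp only [Subgroup.coe_mul, mul_assoc, ← coe_nnnorm,
    nnnorm_apply_mul_of_mem hΛΓ hχ hφeq (Subgroup.mem_subgroupOf.mp hh)]

theorem tsum_conj_mul_apply_out_mul (γ : Γ) (g : G) :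
    ∑' q : Quotient (rightRel (Λ.subgroupOf Γ)), conj (χ q.out) * φ (q.out * (γ * g)) =
      χ γ * ∑' q : Quotient (rightRel (Λ.subgroupOf Γ)), conj (χ q.out) * φ (q.out * g) := by
  have hunit : χ γ * conj (χ γ) = 1 := by rw [Complex.mul_conj', hχ]; norm_num
  have hterm (x : Γ) :
      conj (χ x) * φ (x * (γ * g)) = χ γ * (conj (χ (x * γ)) * φ (↑(x * γ) * g)) := by
    rw [map_mul, map_mul, Subgroup.coe_mul, mul_assoc (x : G)]
    linear_combination (-conj (χ x) * φ (x * (γ * g))) * hunit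
  simp only [hterm]
  rw [tsum_mul_left,
    tsum_out_mul (T := fun x : Γ => conj (χ x) * φ (x * g))
      (fun h hh x => conj_mul_apply_mul_of_mem hΛΓ hχ hφeq hh x g) γ]

end PoincareSeries

section PoincareSeriesIntegrability

variable {G : Type*} [Group G] [TopologicalSpace G] [IsTopologicalGroup G] [MeasurableSpace G]
  [BorelSpace G] {μ : Measure G} [μ.IsMulLeftInvariant] {Γ Λ : Subgroup G} [Countable Γ]
  (hΛΓ : Λ ≤ Γ) {χ : Γ →* ℂ} (hχ : ∀ γ : Γ, ‖χ γ‖ = 1) {φ : G → ℂ} (hφmeas : Measurable φ)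
  (hφeq : ∀ (lam : Λ) (g : G), φ ((lam : G) * g) = χ ⟨(lam : G), hΛΓ lam.2⟩ * φ g)
  {FΛ FΓ : Set G} (hFΛ : IsFundamentalDomain Λ FΛ μ) (hFΓ : IsFundamentalDomain Γ FΓ μ)
include hχ hφmeas hφeq hFΛ hFΓ

theorem setLIntegral_tsum_enorm_apply_out_mul :
    ∫⁻ x in FΓ, ∑' q : Quotient (rightRel (Λ.subgroupOf Γ)), ‖φ (q.out * x)‖ₑ ∂μ =
      ∫⁻ x in FΛ, ‖φ x‖ₑ ∂μ := by
  rw [lintegral_tsum fun q : Quotient (rightRel (Λ.subgroupOf Γ)) =>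
      (by fun_prop : Measurable fun x => ‖φ (q.out * x)‖ₑ).aemeasurable,
    (hFΛ.of_subgroupOf hΛΓ).setLIntegral_eq_tsum_quotient hFΓ (f := (‖φ ·‖ₑ))]
  · rfl
  · intro h hh x
    exact congrArg ENNReal.ofNNReal
      (nnnorm_apply_mul_of_mem hΛΓ hχ hφeq (Subgroup.mem_subgroupOf.mp hh) x)

variable (hφint : IntegrableOn (fun g => ‖φ g‖) FΛ μ)
include hφint

theorem setLIntegral_tsum_enorm_apply_out_mul_ne_top :
    ∫⁻ x in FΓ, ∑' q : Quotient (rightRel (Λ.subgroupOf Γ)), ‖φ (q.out * x)‖ₑ ∂μ ≠ ⊤ := by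
  rw [setLIntegral_tsum_enorm_apply_out_mul hΛΓ hχ hφmeas hφeq hFΛ hFΓ]
  exact ((hasFiniteIntegral_norm_iff φ).mp hφint.2).ne

theorem ae_summable_norm_apply_out_mul :
    ∀ᵐ g ∂μ, Summable fun q : Quotient (rightRel (Λ.subgroupOf Γ)) => ‖φ (q.out * g)‖ := by
  refine hFΓ.ae_of_ae_restrict (summable_norm_apply_out_mul_iff hΛΓ hχ hφeq) ?_
  exact ae_summable_norm_of_lintegral_tsum_enorm_ne_top
    (fun q => (by fun_prop : Measurable fun x => ‖φ (q.out * x)‖ₑ).aemeasurable)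
    (setLIntegral_tsum_enorm_apply_out_mul_ne_top hΛΓ hχ hφmeas hφeq hFΛ hFΓ hφint)

theorem integrableOn_norm_tsum_conj_mul_apply_out_mul :
    IntegrableOn (fun g => ‖∑' q : Quotient (rightRel (Λ.subgroupOf Γ)),
      conj (χ q.out) * φ (q.out * g)‖) FΓ μ := by
  have hterm (q : Quotient (rightRel (Λ.subgroupOf Γ))) (g : G) :
      ‖conj (χ q.out) * φ (q.out * g)‖ₑ = ‖φ (q.out * g)‖ₑ := by
    rw [enorm_mul, RCLike.enorm_conj, ← ofReal_norm, hχ, ENNReal.ofReal_one, one_mul]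
  refine (integrable_tsum_of_lintegral_tsum_enorm_ne_top (fun q => ?_) ?_).norm
  · exact (by fun_prop : Measurable fun g => conj (χ q.out) * φ (q.out * g)).aestronglyMeasurable
  · simpa only [hterm] using
      setLIntegral_tsum_enorm_apply_out_mul_ne_top hΛΓ hχ hφmeas hφeq hFΛ hFΓ hφint

end PoincareSeriesIntegrability

theorem poincare_series_convergence_general
    (G : Type*) [Group G] [TopologicalSpace G] [IsTopologicalGroup G]
    [SecondCountableTopology G]
    [MeasurableSpace G] [BorelSpace G]
    (μ : Measure G) [μ.IsHaarMeasure]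
    (Γ Λ : Subgroup G) [DiscreteTopology Γ] (hΛΓ : Λ ≤ Γ)
    (χ : Γ →* ℂ) (hχ : ∀ γ : Γ, ‖χ γ‖ = 1)
    (φ : G → ℂ) (hφmeas : Measurable φ)
    (hφeq : ∀ (lam : Λ) (g : G), φ ((lam : G) * g) = χ ⟨(lam : G), hΛΓ lam.2⟩ * φ g)
    (FΛ FΓ : Set G)
    (hFΛ : IsFundamentalDomain Λ FΛ μ) (hFΓ : IsFundamentalDomain Γ FΓ μ)
    (hφint : IntegrableOn (fun g => ‖φ g‖) FΛ μ) :
    (∀ᵐ g ∂μ, Summable (fun q : Quotient (QuotientGroup.rightRel (Λ.subgroupOf Γ)) =>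
        ‖φ ((q.out : G) * g)‖))
    ∧ (∀ γ : Γ, ∀ᵐ g ∂μ,
        (∑' q : Quotient (QuotientGroup.rightRel (Λ.subgroupOf Γ)),
            (starRingEnd ℂ) (χ q.out) * φ ((q.out : G) * ((γ : G) * g)))
          = χ γ * ∑' q : Quotient (QuotientGroup.rightRel (Λ.subgroupOf Γ)),
              (starRingEnd ℂ) (χ q.out) * φ ((q.out : G) * g))
    ∧ IntegrableOn
        (fun g => ‖∑' q : Quotient (QuotientGroup.rightRel (Λ.subgroupOf Γ)),
            (starRingEnd ℂ) (χ q.out) * φ ((q.out : G) * g)‖)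
        FΓ μ := by
  have : Countable Γ := TopologicalSpace.separableSpace_iff_countable.mp inferInstance
  exact ⟨ae_summable_norm_apply_out_mul hΛΓ hχ hφmeas hφeq hFΛ hFΓ hφint,
    fun γ => .of_forall (tsum_conj_mul_apply_out_mul hΛΓ hχ hφeq γ),
    integrableOn_norm_tsum_conj_mul_apply_out_mul hΛΓ hχ hφmeas hφeq hFΛ hFΓ hφint⟩

theorem poincare_series_convergence
    (G : Type*) [Group G] [TopologicalSpace G] [IsTopologicalGroup G]
    [LocallyCompactSpace G] [T2Space G] [SecondCountableTopology G]
    [MeasurableSpace G] [BorelSpace G]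
    (μ : Measure G) [μ.IsHaarMeasure] [μ.IsMulRightInvariant]
    (Γ Λ : Subgroup G) [DiscreteTopology Γ] (hΛΓ : Λ ≤ Γ)
    (χ : Γ →* ℂ) (hχ : ∀ γ : Γ, ‖χ γ‖ = 1)
    (φ : G → ℂ) (hφmeas : Measurable φ)
    (hφeq : ∀ (lam : Λ) (g : G), φ ((lam : G) * g) = χ ⟨(lam : G), hΛΓ lam.2⟩ * φ g)
    (FΛ FΓ : Set G)
    (hFΛ : IsFundamentalDomain Λ FΛ μ) (hFΓ : IsFundamentalDomain Γ FΓ μ)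
    (hφint : IntegrableOn (fun g => ‖φ g‖) FΛ μ) :
    (∀ᵐ g ∂μ, Summable (fun q : Quotient (QuotientGroup.rightRel (Λ.subgroupOf Γ)) =>
        ‖φ ((q.out : G) * g)‖))
    ∧ (∀ γ : Γ, ∀ᵐ g ∂μ,
        (∑' q : Quotient (QuotientGroup.rightRel (Λ.subgroupOf Γ)),
            (starRingEnd ℂ) (χ q.out) * φ ((q.out : G) * ((γ : G) * g)))
          = χ γ * ∑' q : Quotient (QuotientGroup.rightRel (Λ.subgroupOf Γ)),
              (starRingEnd ℂ) (χ q.out) * φ ((q.out : G) * g))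
    ∧ IntegrableOn
        (fun g => ‖∑' q : Quotient (QuotientGroup.rightRel (Λ.subgroupOf Γ)),
            (starRingEnd ℂ) (χ q.out) * φ ((q.out : G) * g)‖)
        FΓ μ :=
  poincare_series_convergence_general G μ Γ Λ hΛΓ χ hχ φ hφmeas hφeq FΛ FΓ hFΛ hFΓ hφint
end

section
/- Let G, Γ, Λ, χ, φ be as in the Poincaré series lemma (φ measurable, φ(λg)=χ(λ)φ(g) for λ∈Λ, |φ|∈L¹(Λ\G)). Suppose C ⊆ G is Borel with C·C⁻¹ ∩ Γ ⊆ Λ, and suppose ∫_{Λ\ΛC} |φ| dμ_{Λ\G} > ∫_{Λ\(G∖ΛC)} |φ| dμ_{Λ\G}. Then ∫_{Γ\G} |∑_{γ∈Λ\Γ} conj(χ(γ)) φ(γg)| dμ_{Γ\G}(g) > 0; in particular the Poincaré series P φ is not identically zero almost everywhere. -/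
/-!
Write `D = ΛC`; it is left `Λ`-invariant. The translates `γ F_Γ`, with `γ` running over
representatives of `Λ\Γ`, together form a fundamental domain for `Λ`, so integrals over `Λ\G` of
left `Λ`-invariant functions unfold to integrals over `Γ\G` of sums over `Λ\Γ`. Since
`CC⁻¹ ∩ Γ ⊆ Λ`, for each `g` at most one coset `γ` has `γg ∈ D`, and the triangle inequality gives
`∑_γ (|φ| 1_D)(γg) ≤ |Pφ(g)| + ∑_γ (|φ| 1_{G∖D})(γg)`. Integrating,
`∫_{Λ\ΛC} |φ| ≤ ∫_{Γ\G} |Pφ| + ∫_{Λ\(G∖ΛC)} |φ|`, all terms being finite as `|φ| ∈ L¹(Λ\G)`.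
-/

open MeasureTheory Pointwise Filter
open scoped ENNReal

section Summation

variable {ι E : Type*} [NormedAddCommGroup E] [CompleteSpace E]

theorem enorm_le_enorm_tsum_add_tsum_compl_indicator (f : ι → E) (i₀ : ι) :
    ‖f i₀‖ₑ ≤ ‖∑' i, f i‖ₑ + ∑' i, ({i₀}ᶜ : Set ι).indicator (‖f ·‖ₑ) i := by
  classical
  simp only [Set.indicator_apply, Set.mem_compl_iff, Set.mem_singleton_iff, ite_not]
  by_cases hf : ∑' i, ‖f i‖ₑ = ∞
  · rw [ENNReal.tsum_eq_add_tsum_ite i₀, ENNReal.add_eq_top] at hf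
    rcases hf with hf | hf
    · exact absurd hf enorm_ne_top
    · simp [hf]
  have hsum : Summable f := .of_enorm hf
  calc ‖f i₀‖ₑ = ‖(∑' i, f i) - ∑' i, if i = i₀ then 0 else f i‖ₑ := by
        rw [hsum.tsum_eq_add_tsum_ite i₀, add_sub_cancel_right]
    _ ≤ ‖∑' i, f i‖ₑ + ‖∑' i, if i = i₀ then 0 else f i‖ₑ := enorm_sub_le
    _ ≤ _ := by
        gcongr
        refine enorm_tsum_le_tsum_enorm.trans_eq (tsum_congr fun i => ?_)
        split_ifs <;> simp

theorem tsum_indicator_enorm_le_of_subsingleton (f : ι → E) {s : Set ι} (hs : s.Subsingleton) :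
    ∑' i, s.indicator (‖f ·‖ₑ) i ≤ ‖∑' i, f i‖ₑ + ∑' i, sᶜ.indicator (‖f ·‖ₑ) i := by
  rcases hs.eq_empty_or_singleton with rfl | ⟨i₀, rfl⟩
  · simp
  · rw [← tsum_subtype, tsum_singleton i₀ fun i => ‖f i‖ₑ]
    exact enorm_le_enorm_tsum_add_tsum_compl_indicator f i₀

theorem MeasureTheory.integrable_tsum_of_lintegral_tsum_enorm_ne_top_s15 {α : Type*}
    [MeasurableSpace α] {μ : Measure α} [Countable ι] {f : ι → α → E}
    (hf : ∀ i, AEStronglyMeasurable (f i) μ)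
    (h : ∫⁻ a, ∑' i, ‖f i a‖ₑ ∂μ ≠ ∞) : Integrable (fun a => ∑' i, f i a) μ := by
  have hsum : ∀ᵐ a ∂μ, Summable fun i => f i a :=
    (ae_lt_top' (AEMeasurable.tsum fun i => (hf i).enorm) h).mono
      fun a ha => .of_enorm ha.ne
  refine ⟨aestronglyMeasurable_of_tendsto_ae atTop
    (fun s => Finset.aestronglyMeasurable_fun_sum s fun i _ => hf i)
    (hsum.mono fun a ha => ha.hasSum), ?_⟩
  exact (lintegral_mono fun a => enorm_tsum_le_tsum_enorm).trans_lt h.lt_top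

end Summation

section Cosets

variable {G : Type*} [Group G] {Γ Λ : Subgroup G}

theorem QuotientGroup.eq_of_out_mul_inv_out_mem
    {q q' : Quotient (QuotientGroup.rightRel (Λ.subgroupOf Γ))}
    (h : (q.out : G) * (q'.out : G)⁻¹ ∈ Λ) : q = q' := by
  refine (Quotient.out_equiv_out.mp ?_).symm
  refine QuotientGroup.rightRel_apply.mpr (Subgroup.mem_subgroupOf.mpr ?_)
  simpa using h

theorem QuotientGroup.exists_out_mul_mem (γ : Γ) :
    ∃ q : Quotient (QuotientGroup.rightRel (Λ.subgroupOf Γ)), (q.out : G) * γ ∈ Λ := by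
  refine ⟨Quotient.mk _ γ⁻¹, ?_⟩
  have h := QuotientGroup.rightRel_apply.mp
    (Quotient.mk_out (s := QuotientGroup.rightRel (Λ.subgroupOf Γ)) γ⁻¹)
  simpa [Subgroup.mem_subgroupOf] using (Λ.subgroupOf Γ).inv_mem h

theorem QuotientGroup.mul_out_injective :
    Function.Injective fun p : Λ × Quotient (QuotientGroup.rightRel (Λ.subgroupOf Γ)) =>
      (p.1 : G) * p.2.out := by
  rintro ⟨l₁, q₁⟩ ⟨l₂, q₂⟩ h
  dsimp only at h
  obtain rfl : q₁ = q₂ := QuotientGroup.eq_of_out_mul_inv_out_mem <| by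
    rw [show (q₁.out : G) * (q₂.out : G)⁻¹ = (l₁ : G)⁻¹ * l₂ by
      rw [mul_inv_eq_iff_eq_mul, mul_assoc, ← h, inv_mul_cancel_left]]
    exact Λ.mul_mem (Λ.inv_mem l₁.2) l₂.2
  simpa using h

end Cosets

section FundamentalDomain

variable {G α : Type*} [Group G] [MulAction G α] [MeasurableSpace α] [MeasurableConstSMul G α]
  {μ : Measure α} [SMulInvariantMeasure G α μ] {Γ Λ : Subgroup G}

theorem MeasureTheory.IsFundamentalDomain.iUnion_out_smul (hΛΓ : Λ ≤ Γ) [Countable Γ]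
    {F : Set α} (hF : IsFundamentalDomain Γ F μ) :
    IsFundamentalDomain Λ (⋃ q : Quotient (QuotientGroup.rightRel (Λ.subgroupOf Γ)),
      (q.out : G) • F) μ where
  nullMeasurableSet := .iUnion fun q => hF.nullMeasurableSet.smul _
  ae_covers := hF.ae_covers.mono fun x ⟨γ, hγ⟩ => by
    obtain ⟨q, hq⟩ := QuotientGroup.exists_out_mul_mem (Λ := Λ) γ
    refine ⟨⟨_, hq⟩, Set.mem_iUnion.mpr ⟨q, ?_⟩⟩
    rw [Subgroup.mk_smul, mul_smul]
    exact Set.smul_mem_smul_set hγ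
  aedisjoint l₁ l₂ hne := by
    simp only [Function.onFun, Subgroup.smul_def, Set.smul_set_iUnion, smul_smul]
    refine AEDisjoint.iUnion_left_iff.mpr fun q₁ => AEDisjoint.iUnion_right_iff.mpr fun q₂ => ?_
    have hne' : (⟨l₁, hΛΓ l₁.2⟩ * q₁.out : Γ) ≠ ⟨l₂, hΛΓ l₂.2⟩ * q₂.out := fun h =>
      hne (congrArg Prod.fst <| QuotientGroup.mul_out_injective (a₁ := (l₁, q₁))
        (a₂ := (l₂, q₂)) (congrArg Subtype.val h))
    exact hF.aedisjoint hne'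

theorem MeasureTheory.IsFundamentalDomain.setLIntegral_eq_setLIntegral_tsum_out_smul
    [Countable Γ] (hΛΓ : Λ ≤ Γ) {FΛ FΓ : Set α} (hFΛ : IsFundamentalDomain Λ FΛ μ)
    (hFΓ : IsFundamentalDomain Γ FΓ μ) {k : α → ℝ≥0∞} (hk : Measurable k)
    (hkΛ : ∀ (l : Λ) x, k (l • x) = k x) :
    ∫⁻ x in FΛ, k x ∂μ =
      ∫⁻ x in FΓ, ∑' q : Quotient (QuotientGroup.rightRel (Λ.subgroupOf Γ)),
        k ((q.out : G) • x) ∂μ := by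
  have : Countable Λ := (Subgroup.inclusion_injective hΛΓ).countable
  calc ∫⁻ x in FΛ, k x ∂μ
      = ∫⁻ x in ⋃ q : Quotient (QuotientGroup.rightRel (Λ.subgroupOf Γ)), (q.out : G) • FΓ,
          k x ∂μ := hFΛ.setLIntegral_eq (hFΓ.iUnion_out_smul hΛΓ) k hkΛ
    _ = ∑' q : Quotient (QuotientGroup.rightRel (Λ.subgroupOf Γ)),
          ∫⁻ x in (q.out : G) • FΓ, k x ∂μ :=
        lintegral_iUnion₀ (fun q => hFΓ.nullMeasurableSet.smul _)
          (hFΓ.aedisjoint.comp_of_injective Quotient.out_injective) k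
    _ = ∑' q : Quotient (QuotientGroup.rightRel (Λ.subgroupOf Γ)),
          ∫⁻ x in FΓ, k ((q.out : G) • x) ∂μ := tsum_congr fun q => by
        rw [(measurePreserving_smul (q.out : G) μ).setLIntegral_comp_emb
          (measurableEmbedding_const_smul _) k FΓ, Set.image_smul]
    _ = _ := (lintegral_tsum fun q => (hk.comp (measurable_const_smul _)).aemeasurable).symm

theorem MeasureTheory.IsFundamentalDomain.setLIntegral_inter_eq_setLIntegral_tsum_indicator
    [Countable Γ] (hΛΓ : Λ ≤ Γ) {FΛ FΓ : Set α} (hFΛ : IsFundamentalDomain Λ FΛ μ)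
    (hFΓ : IsFundamentalDomain Γ FΓ μ) {k : α → ℝ≥0∞} (hk : Measurable k)
    (hkΛ : ∀ (l : Λ) x, k (l • x) = k x) {s : Set α} (hs : MeasurableSet s)
    (hsΛ : ∀ (l : Λ) x, l • x ∈ s ↔ x ∈ s) :
    ∫⁻ x in FΛ ∩ s, k x ∂μ =
      ∫⁻ x in FΓ, ∑' q : Quotient (QuotientGroup.rightRel (Λ.subgroupOf Γ)),
        s.indicator k ((q.out : G) • x) ∂μ := by
  rw [Set.inter_comm, ← Measure.restrict_restrict hs, ← lintegral_indicator hs]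
  refine hFΛ.setLIntegral_eq_setLIntegral_tsum_out_smul hΛΓ hFΓ (hk.indicator hs) fun l x => ?_
  by_cases hx : x ∈ s <;> simp [hx, hsΛ, hkΛ]

end FundamentalDomain

section SubgroupMulSet

variable {G : Type*} [Group G] {Γ Λ : Subgroup G} {C : Set G}

theorem Set.Countable.measurableSet_mul [MeasurableSpace G] [MeasurableMul G] {s t : Set G}
    (hs : s.Countable) (ht : MeasurableSet t) : MeasurableSet (s * t) := by
  rw [← Set.iUnion_mul_left_image]
  exact .biUnion hs fun a _ => (measurableEmbedding_mulLeft a).measurableSet_image.mpr ht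

theorem Subgroup.mul_mem_coe_mul_iff {l : G} (hl : l ∈ Λ) {g : G} :
    l * g ∈ (Λ : Set G) * C ↔ g ∈ (Λ : Set G) * C := by
  constructor
  · rintro ⟨l', hl', c, hc, h⟩
    refine ⟨l⁻¹ * l', Λ.mul_mem (Λ.inv_mem hl) hl', c, hc, ?_⟩
    simp only at h ⊢
    rw [mul_assoc, h, inv_mul_cancel_left]
  · rintro ⟨l', hl', c, hc, rfl⟩
    exact ⟨l * l', Λ.mul_mem hl hl', c, hc, mul_assoc _ _ _⟩

theorem mul_inv_mem_of_mul_mem_coe_mul (hΛΓ : Λ ≤ Γ)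
    (hC : ∀ c₁ ∈ C, ∀ c₂ ∈ C, c₁ * c₂⁻¹ ∈ Γ → c₁ * c₂⁻¹ ∈ Λ) {γ₁ γ₂ x : G} (hγ₁ : γ₁ ∈ Γ)
    (hγ₂ : γ₂ ∈ Γ) (h₁ : γ₁ * x ∈ (Λ : Set G) * C) (h₂ : γ₂ * x ∈ (Λ : Set G) * C) :
    γ₁ * γ₂⁻¹ ∈ Λ := by
  obtain ⟨l₁, hl₁, c₁, hc₁, e₁⟩ := h₁
  obtain ⟨l₂, hl₂, c₂, hc₂, e₂⟩ := h₂
  have e : γ₁ * γ₂⁻¹ = l₁ * (c₁ * c₂⁻¹) * l₂⁻¹ :=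
    calc γ₁ * γ₂⁻¹ = γ₁ * x * (γ₂ * x)⁻¹ := by group
      _ = _ := by rw [← e₁, ← e₂]; group
  have hcΓ : c₁ * c₂⁻¹ ∈ Γ := by
    rw [show c₁ * c₂⁻¹ = l₁⁻¹ * (γ₁ * γ₂⁻¹) * l₂ by rw [e]; group]
    exact Γ.mul_mem (Γ.mul_mem (Γ.inv_mem (hΛΓ hl₁)) (Γ.mul_mem hγ₁ (Γ.inv_mem hγ₂))) (hΛΓ hl₂)
  rw [e]
  exact Λ.mul_mem (Λ.mul_mem hl₁ (hC c₁ hc₁ c₂ hc₂ hcΓ)) (Λ.inv_mem hl₂)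

theorem subsingleton_setOf_out_mul_mem_coe_mul (hΛΓ : Λ ≤ Γ)
    (hC : ∀ c₁ ∈ C, ∀ c₂ ∈ C, c₁ * c₂⁻¹ ∈ Γ → c₁ * c₂⁻¹ ∈ Λ) (x : G) :
    {q : Quotient (QuotientGroup.rightRel (Λ.subgroupOf Γ)) |
      (q.out : G) * x ∈ (Λ : Set G) * C}.Subsingleton := fun _ h₁ _ h₂ =>
  QuotientGroup.eq_of_out_mul_inv_out_mem
    (mul_inv_mem_of_mul_mem_coe_mul hΛΓ hC (SetLike.coe_mem _) (SetLike.coe_mem _) h₁ h₂)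

end SubgroupMulSet

section PoincareSeries

variable {G : Type*} [Group G] {Γ Λ : Subgroup G}

noncomputable def poincareSeries (Λ : Subgroup G) (χ : Γ →* ℂ) (φ : G → ℂ) (g : G) : ℂ :=
  ∑' q : Quotient (QuotientGroup.rightRel (Λ.subgroupOf Γ)),
    (starRingEnd ℂ) (χ q.out) * φ ((q.out : G) * g)

theorem Complex.enorm_conj_mul_of_norm_eq_one {z w : ℂ} (hz : ‖z‖ = 1) :
    ‖(starRingEnd ℂ) z * w‖ₑ = ‖w‖ₑ := by
  rw [enorm_mul, ← ofReal_norm, Complex.norm_conj, hz, ENNReal.ofReal_one, one_mul]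

variable [MeasurableSpace G] [MeasurableMul G] {μ : Measure G} [μ.IsMulLeftInvariant]
  [Countable Γ] {χ : Γ →* ℂ} {φ : G → ℂ} {FΛ FΓ : Set G}

theorem integrableOn_poincareSeries (hΛΓ : Λ ≤ Γ) (hχ : ∀ γ : Γ, ‖χ γ‖ = 1)
    (hφ : Measurable φ) (hφΛ : ∀ (l : Λ) (g : G), ‖φ (l * g)‖ₑ = ‖φ g‖ₑ)
    (hFΛ : IsFundamentalDomain Λ FΛ μ) (hFΓ : IsFundamentalDomain Γ FΓ μ)
    (hφFΛ : ∫⁻ g in FΛ, ‖φ g‖ₑ ∂μ ≠ ∞) :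
    IntegrableOn (poincareSeries Λ χ φ) FΓ μ := by
  refine integrable_tsum_of_lintegral_tsum_enorm_ne_top_s15
    (fun q => (measurable_const.mul (hφ.comp (measurable_const_mul _))).aestronglyMeasurable) ?_
  simp_rw [Complex.enorm_conj_mul_of_norm_eq_one (hχ _)]
  exact (hFΛ.setLIntegral_eq_setLIntegral_tsum_out_smul hΛΓ hFΓ hφ.enorm hφΛ).symm.trans_ne
    hφFΛ

theorem setLIntegral_inter_le_setLIntegral_poincareSeries_add (hΛΓ : Λ ≤ Γ)
    (hχ : ∀ γ : Γ, ‖χ γ‖ = 1) (hφ : Measurable φ)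
    (hφΛ : ∀ (l : Λ) (g : G), ‖φ (l * g)‖ₑ = ‖φ g‖ₑ)
    (hFΛ : IsFundamentalDomain Λ FΛ μ) (hFΓ : IsFundamentalDomain Γ FΓ μ) {C : Set G}
    (hC_meas : MeasurableSet C) (hC : ∀ c₁ ∈ C, ∀ c₂ ∈ C, c₁ * c₂⁻¹ ∈ Γ → c₁ * c₂⁻¹ ∈ Λ)
    (hP : AEMeasurable (fun g => ‖poincareSeries Λ χ φ g‖ₑ) (μ.restrict FΓ)) :
    ∫⁻ g in FΛ ∩ ((Λ : Set G) * C), ‖φ g‖ₑ ∂μ ≤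
      ∫⁻ g in FΓ, ‖poincareSeries Λ χ φ g‖ₑ ∂μ + ∫⁻ g in FΛ \ ((Λ : Set G) * C), ‖φ g‖ₑ ∂μ := by
  have : Countable Λ := (Subgroup.inclusion_injective hΛΓ).countable
  have hD : MeasurableSet ((Λ : Set G) * C) := (Set.to_countable _).measurableSet_mul hC_meas
  have hDΛ (l : Λ) (g : G) : l • g ∈ (Λ : Set G) * C ↔ g ∈ (Λ : Set G) * C :=
    Subgroup.mul_mem_coe_mul_iff l.2
  rw [Set.sdiff_eq,
    hFΛ.setLIntegral_inter_eq_setLIntegral_tsum_indicator hΛΓ hFΓ hφ.enorm hφΛ hD hDΛ,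
    hFΛ.setLIntegral_inter_eq_setLIntegral_tsum_indicator hΛΓ hFΓ hφ.enorm hφΛ hD.compl
      fun l g => not_congr (hDΛ l g), ← lintegral_add_left' hP]
  refine lintegral_mono fun g => ?_
  have hpointwise := tsum_indicator_enorm_le_of_subsingleton
    (fun q : Quotient (QuotientGroup.rightRel (Λ.subgroupOf Γ)) =>
      (starRingEnd ℂ) (χ q.out) * φ ((q.out : G) * g))
    (subsingleton_setOf_out_mul_mem_coe_mul hΛΓ hC g)
  simp only [Complex.enorm_conj_mul_of_norm_eq_one (hχ _)] at hpointwise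
  -- the indicator of `{q | q.out * g ∈ ΛC}` is definitionally that of `ΛC` read at `q.out * g`
  exact hpointwise

end PoincareSeries

theorem poincare_series_nonvanishing_criterion_general
    (G : Type*) [Group G] [TopologicalSpace G] [IsTopologicalGroup G]
    [SecondCountableTopology G]
    [MeasurableSpace G] [BorelSpace G]
    (μ : Measure G) [μ.IsHaarMeasure]
    (Γ Λ : Subgroup G) [DiscreteTopology Γ] (hΛΓ : Λ ≤ Γ)
    (χ : Γ →* ℂ) (hχ : ∀ γ : Γ, ‖χ γ‖ = 1)
    (φ : G → ℂ) (hφmeas : Measurable φ)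
    (hφeq : ∀ (lam : Λ) (g : G), φ ((lam : G) * g) = χ ⟨(lam : G), hΛΓ lam.2⟩ * φ g)
    (FΛ FΓ : Set G)
    (hFΛ : IsFundamentalDomain Λ FΛ μ) (hFΓ : IsFundamentalDomain Γ FΓ μ)
    (hφint : IntegrableOn (fun g => ‖φ g‖) FΛ μ)
    (C : Set G) (hCmeas : MeasurableSet C)
    (hC : ∀ c₁ ∈ C, ∀ c₂ ∈ C, c₁ * c₂⁻¹ ∈ Γ → c₁ * c₂⁻¹ ∈ Λ)
    (hgt : (∫ g in FΛ ∩ ((Λ : Set G) * C), ‖φ g‖ ∂μ)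
      > ∫ g in FΛ \ ((Λ : Set G) * C), ‖φ g‖ ∂μ) :
    0 < ∫ g in FΓ,
        ‖∑' q : Quotient (QuotientGroup.rightRel (Λ.subgroupOf Γ)),
          (starRingEnd ℂ) (χ q.out) * φ ((q.out : G) * g)‖ ∂μ := by
  have : Countable Γ := TopologicalSpace.separableSpace_iff_countable.mp inferInstance
  have hφΛ (l : Λ) (g : G) : ‖φ (l * g)‖ₑ = ‖φ g‖ₑ := by
    rw [hφeq, enorm_mul, ← ofReal_norm (χ _), hχ, ENNReal.ofReal_one, one_mul]
  have hφFΛ : ∫⁻ g in FΛ, ‖φ g‖ₑ ∂μ ≠ ∞ := ((hasFiniteIntegral_norm_iff φ).mp hφint.2).ne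
  have hP := integrableOn_poincareSeries hΛΓ hχ hφmeas hφΛ hFΛ hFΓ hφFΛ
  have hlt : ∫⁻ g in FΛ \ ((Λ : Set G) * C), ‖φ g‖ₑ ∂μ <
      ∫⁻ g in FΛ ∩ ((Λ : Set G) * C), ‖φ g‖ₑ ∂μ := by
    rw [gt_iff_lt, integral_norm_eq_lintegral_enorm hφmeas.aestronglyMeasurable,
      integral_norm_eq_lintegral_enorm hφmeas.aestronglyMeasurable] at hgt
    exact (ENNReal.toReal_lt_toReal
      (ne_top_of_le_ne_top hφFΛ (lintegral_mono_set Set.sdiff_subset))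
      (ne_top_of_le_ne_top hφFΛ (lintegral_mono_set Set.inter_subset_left))).mp hgt
  have hle := setLIntegral_inter_le_setLIntegral_poincareSeries_add hΛΓ hχ hφmeas hφΛ hFΛ hFΓ
    hCmeas hC hP.1.enorm
  change 0 < ∫ g in FΓ, ‖poincareSeries Λ χ φ g‖ ∂μ
  rw [integral_norm_eq_lintegral_enorm hP.1, ENNReal.toReal_pos_iff]
  refine ⟨pos_iff_ne_zero.mpr fun h0 => ?_, hP.2⟩
  rw [h0, zero_add] at hle
  exact (hle.trans_lt hlt).false

theorem poincare_series_nonvanishing_criterion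
    (G : Type*) [Group G] [TopologicalSpace G] [IsTopologicalGroup G]
    [LocallyCompactSpace G] [T2Space G] [SecondCountableTopology G]
    [MeasurableSpace G] [BorelSpace G]
    (μ : Measure G) [μ.IsHaarMeasure] [μ.IsMulRightInvariant]
    (Γ Λ : Subgroup G) [DiscreteTopology Γ] (hΛΓ : Λ ≤ Γ)
    (χ : Γ →* ℂ) (hχ : ∀ γ : Γ, ‖χ γ‖ = 1)
    (φ : G → ℂ) (hφmeas : Measurable φ)
    (hφeq : ∀ (lam : Λ) (g : G), φ ((lam : G) * g) = χ ⟨(lam : G), hΛΓ lam.2⟩ * φ g)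
    (FΛ FΓ : Set G)
    (hFΛ : IsFundamentalDomain Λ FΛ μ) (hFΓ : IsFundamentalDomain Γ FΓ μ)
    (hφint : IntegrableOn (fun g => ‖φ g‖) FΛ μ)
    (C : Set G) (hCmeas : MeasurableSet C)
    (hC : ∀ c₁ ∈ C, ∀ c₂ ∈ C, c₁ * c₂⁻¹ ∈ Γ → c₁ * c₂⁻¹ ∈ Λ)
    (hgt : (∫ g in FΛ ∩ ((Λ : Set G) * C), ‖φ g‖ ∂μ)
      > ∫ g in FΛ \ ((Λ : Set G) * C), ‖φ g‖ ∂μ) :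
    0 < ∫ g in FΓ,
        ‖∑' q : Quotient (QuotientGroup.rightRel (Λ.subgroupOf Γ)),
          (starRingEnd ℂ) (χ q.out) * φ ((q.out : G) * g)‖ ∂μ :=
  poincare_series_nonvanishing_criterion_general G μ Γ Λ hΛΓ χ hχ φ hφmeas hφeq FΛ FΓ hFΛ hFΓ hφint
    C hCmeas hC hgt
end

section
/- Suppose m, s, h, N are real with h, N > 0, m ≥ 4π/(Nh) + 8/3, and 1 < s < m/2. If Γ((s+1)/2) · Γ((s−1)/2) · 2^{m/2−1} / Γ(m/2−1) · (π/(Nh))^{m/2−s} / (m/2 − s) ≤ π, then h·(h/(2π))^{m/2−1} · ∫_{2π/(Nh)}^∞ e^{−y} y^{m/2−2} dy > (1/2) · (h/π)^{s} · Γ((s+1)/2) Γ((s−1)/2) · N^{s−m/2} / (m/2 − s). -/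
open Real MeasureTheory

/-!
The heart of the matter is the median bound `Γ(a)/2 < ∫_{a-1/3}^∞ e^{-y} y^{a-1} dy`. After the
substitution `y = x³` the Gamma density becomes `ψ(x) = 3 x^{3c} e^{-x³}` with `c = a - 1/3`, whose
mode is `b = c^{1/3}`. The inequality `log((1+u)/(1-u)) > 2u + 2u³/3` shows `ψ(b - x) < ψ(b + x)`
for `0 < x < b`, so `ψ` has less mass on `(0, b]` than on `(b, 2b]`: less than half of `Γ(a)` lies
below `a - 1/3`. For `a = m/2 - 1` the hypothesis on `m` puts `2π/(Nh)` below `a - 1/3`, and the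
powers of `h`, `N`, `π` and `2` on the two sides match exactly, so the hypothesis on the Gamma
quotient turns into the claim.
-/

section

open Set

lemma lt_log_one_add_div_one_sub {u : ℝ} (hu₀ : 0 < u) (hu₁ : u < 1) :
    2 * u + 2 * u ^ 3 / 3 < log ((1 + u) / (1 - u)) := by
  have hsum := hasSum_log_sub_log_of_abs_lt_one (abs_lt.mpr ⟨by linarith, hu₁⟩)
  have h3 := sum_le_hasSum (Finset.range 3) (fun k _ => by positivity) hsum
  rw [log_div (by linarith) (by linarith)]
  simp only [Finset.sum_range_succ, Finset.sum_range_zero] at h3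
  norm_num at h3
  nlinarith [pow_pos hu₀ 5]

lemma rpow_mul_exp_neg_pow_three_lt {b x : ℝ} (hx : 0 < x) (hxb : x < b) :
    (b - x) ^ (3 * b ^ 3) * exp (-(b - x) ^ 3) < (b + x) ^ (3 * b ^ 3) * exp (-(b + x) ^ 3) := by
  have hb : 0 < b := hx.trans hxb
  have hsub : 0 < b - x := by linarith
  have hlog := lt_log_one_add_div_one_sub (div_pos hx hb) ((div_lt_one hb).mpr hxb)
  rw [show (1 + x / b) / (1 - x / b) = (b + x) / (b - x) by field_simp,
    log_div (by linarith) hsub.ne'] at hlog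
  rw [rpow_def_of_pos hsub, rpow_def_of_pos (by linarith), ← exp_add, ← exp_add, exp_lt_exp]
  have hscaled := mul_lt_mul_of_pos_left hlog (show 0 < 3 * b ^ 3 by positivity)
  have : 3 * b ^ 3 * (2 * (x / b) + 2 * (x / b) ^ 3 / 3) = 6 * b ^ 2 * x + 2 * x ^ 3 := by
    field_simp; ring
  nlinarith

lemma setIntegral_Ioc_pow_three (g : ℝ → ℝ) {l r : ℝ} (hl : 0 ≤ l) :
    ∫ y in Ioc (l ^ 3) (r ^ 3), g y = ∫ x in Ioc l r, 3 * x ^ 2 * g (x ^ 3) := by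
  have hmono : StrictMono (fun x : ℝ => x ^ 3) := Odd.strictMono_pow (by decide)
  have hIoc : ∀ {l r : ℝ}, 0 ≤ l → Ioc l r = Ioi 0 ∩ Ioc l r := fun hl =>
    (inter_eq_right.mpr fun x hx => hl.trans_lt hx.1).symm
  rw [hIoc (pow_nonneg hl 3), hIoc hl, ← setIntegral_indicator measurableSet_Ioc,
    ← setIntegral_indicator measurableSet_Ioc,
    ← integral_comp_rpow_Ioi _ (show (3 : ℝ) ≠ 0 by norm_num)]
  refine setIntegral_congr_fun measurableSet_Ioi fun x (hx : 0 < x) => ?_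
  have hcube : x ^ (3 : ℝ) = x ^ 3 := by exact_mod_cast rpow_natCast x 3
  have hmem : x ^ 3 ∈ Ioc (l ^ 3) (r ^ 3) ↔ x ∈ Ioc l r := by
    simp only [mem_Ioc, hmono.lt_iff_lt, hmono.le_iff_le]
  by_cases h : x ∈ Ioc l r
  · rw [hcube, indicator_of_mem (hmem.mpr h), indicator_of_mem h, smul_eq_mul,
      show (3 : ℝ) - 1 = (2 : ℕ) by norm_num, rpow_natCast]
    norm_num
  · rw [hcube, indicator_of_notMem (mt hmem.mp h), indicator_of_notMem h, smul_zero]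

lemma setIntegral_Ioc_lt_of_reflect_lt {ψ : ℝ → ℝ} (hψ : Continuous ψ) {b : ℝ} (hb : 0 < b)
    (hlt : ∀ x ∈ Ioo 0 b, ψ (b - x) < ψ (b + x)) :
    ∫ x in Ioc 0 b, ψ x < ∫ x in Ioc b (2 * b), ψ x := by
  have hleft : ∫ x in (0 : ℝ)..b, ψ (b - x) = ∫ x in (0 : ℝ)..b, ψ x := by
    simp [intervalIntegral.integral_comp_sub_left ψ b]
  have hright : ∫ x in (0 : ℝ)..b, ψ (b + x) = ∫ x in b..2 * b, ψ x := by
    simp [intervalIntegral.integral_comp_add_left ψ b, two_mul]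
  have hint : ∀ f : ℝ → ℝ, Continuous f → IntervalIntegrable f volume 0 b :=
    fun f hf => hf.intervalIntegrable 0 b
  have hpos : 0 < ∫ x in (0 : ℝ)..b, (ψ (b + x) - ψ (b - x)) :=
    intervalIntegral.intervalIntegral_pos_of_pos_on
      ((hint _ (by fun_prop)).sub (hint _ (by fun_prop))) (fun x hx => sub_pos.mpr (hlt x hx)) hb
  rw [intervalIntegral.integral_sub (hint _ (by fun_prop)) (hint _ (by fun_prop)),
    hleft, hright, intervalIntegral.integral_of_le hb.le,
    intervalIntegral.integral_of_le (by linarith)] at hpos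
  linarith

lemma integral_Ioc_lt_integral_Ioi_gammaIntegrand {a : ℝ} (ha : 1 / 3 < a) :
    ∫ y in Ioc 0 (a - 1 / 3), exp (-y) * y ^ (a - 1)
      < ∫ y in Ioi (a - 1 / 3), exp (-y) * y ^ (a - 1) := by
  set c := a - 1 / 3
  have hc : 0 < c := by simp only [c]; linarith
  set b := c ^ ((1 : ℝ) / 3)
  have hb : 0 < b := rpow_pos_of_pos hc _
  have hb3 : b ^ 3 = c := by
    rw [← rpow_natCast, ← rpow_mul hc.le]; norm_num
  set ψ : ℝ → ℝ := fun x => 3 * x ^ (3 * b ^ 3) * exp (-x ^ 3)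
  have hψ : ∀ x ∈ Ioi (0 : ℝ), 3 * x ^ 2 * (exp (-x ^ 3) * (x ^ 3) ^ (a - 1)) = ψ x := by
    intro x (hx : 0 < x)
    have : (x ^ 3) ^ (a - 1) * x ^ 2 = x ^ (3 * b ^ 3) := by
      rw [← rpow_natCast x 3, ← rpow_mul hx.le, ← rpow_natCast x 2, ← rpow_add hx, hb3]
      simp only [c]; push_cast; ring_nf
    simp only [ψ, ← this]; ring
  have hsubst : ∀ {l r : ℝ}, 0 ≤ l →
      ∫ y in Ioc (l ^ 3) (r ^ 3), exp (-y) * y ^ (a - 1) = ∫ x in Ioc l r, ψ x := fun hl =>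
    (setIntegral_Ioc_pow_three _ hl).trans <| setIntegral_congr_fun measurableSet_Ioc
      fun x hx => hψ x (hl.trans_lt hx.1)
  have hψcont : Continuous ψ := by
    have : 0 ≤ 3 * b ^ 3 := by positivity
    fun_prop (disch := exact this)
  have hhead := setIntegral_Ioc_lt_of_reflect_lt hψcont hb fun x hx => by
    simpa only [ψ, mul_assoc] using mul_lt_mul_of_pos_left
      (rpow_mul_exp_neg_pow_three_lt hx.1 hx.2) (show (0 : ℝ) < 3 by norm_num)
  rw [← hsubst le_rfl, ← hsubst hb.le, zero_pow three_ne_zero, hb3] at hhead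
  have hmid : ∫ y in Ioc c ((2 * b) ^ 3), exp (-y) * y ^ (a - 1)
      ≤ ∫ y in Ioi c, exp (-y) * y ^ (a - 1) :=
    setIntegral_mono_set ((GammaIntegral_convergent (by linarith)).mono_set (Ioi_subset_Ioi hc.le))
      (ae_restrict_of_forall_mem measurableSet_Ioi fun y (hy : c < y) =>
        mul_nonneg (exp_pos _).le (rpow_nonneg (hc.trans hy).le _))
      (Filter.Eventually.of_forall fun y hy => hy.1)
  exact hhead.trans_le hmid

lemma Gamma_div_two_lt_integral_Ioi {a t : ℝ} (ht : 0 < t) (hta : t ≤ a - 1 / 3) :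
    Gamma a / 2 < ∫ y in Ioi t, exp (-y) * y ^ (a - 1) := by
  have hc : 0 < a - 1 / 3 := ht.trans_le hta
  have hint := GammaIntegral_convergent (show 0 < a by linarith)
  have hsplit : Gamma a = (∫ y in Ioc 0 (a - 1 / 3), exp (-y) * y ^ (a - 1))
      + ∫ y in Ioi (a - 1 / 3), exp (-y) * y ^ (a - 1) := by
    rw [Gamma_eq_integral (by linarith), ← setIntegral_union (Ioc_disjoint_Ioi le_rfl)
      measurableSet_Ioi (hint.mono_set Ioc_subset_Ioi_self) (hint.mono_set (Ioi_subset_Ioi hc.le)),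
      Ioc_union_Ioi_eq_Ioi hc.le]
  have htail : ∫ y in Ioi (a - 1 / 3), exp (-y) * y ^ (a - 1)
      ≤ ∫ y in Ioi t, exp (-y) * y ^ (a - 1) :=
    setIntegral_mono_set (hint.mono_set (Ioi_subset_Ioi ht.le))
      (ae_restrict_of_forall_mem measurableSet_Ioi fun y (hy : t < y) =>
        mul_nonneg (exp_pos _).le (rpow_nonneg (ht.trans hy).le _))
      (Filter.Eventually.of_forall (Ioi_subset_Ioi hta))
  linarith [integral_Ioc_lt_integral_Ioi_gammaIntegrand (a := a) (by linarith)]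

lemma half_mul_rpow_mul_Gamma_eq {m s h N : ℝ} (hh : 0 < h) (hN : 0 < N)
    (hG : Gamma (m / 2 - 1) ≠ 0) :
    (1 / 2) * (h / π) ^ s * Gamma ((s + 1) / 2) * Gamma ((s - 1) / 2) * N ^ (s - m / 2)
        / (m / 2 - s)
      = h * (h / (2 * π)) ^ (m / 2 - 1) * Gamma (m / 2 - 1) / (2 * π)
        * (Gamma ((s + 1) / 2) * Gamma ((s - 1) / 2) * 2 ^ (m / 2 - 1)
          / Gamma (m / 2 - 1) * (π / (N * h)) ^ (m / 2 - s) / (m / 2 - s)) := by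
  have hpowers : (h / π) ^ s * N ^ (s - m / 2) * π
      = h * (h / (2 * π)) ^ (m / 2 - 1) * 2 ^ (m / 2 - 1) * (π / (N * h)) ^ (m / 2 - s) := by
    have hπ := pi_pos
    refine log_injOn_pos (mem_Ioi.mpr (by positivity)) (mem_Ioi.mpr (by positivity)) ?_
    simp (disch := positivity) only [log_mul, log_rpow, log_div]
    ring
  rw [mul_div_assoc']
  congr 1
  generalize (h / π) ^ s = x, N ^ (s - m / 2) = y, (h / (2 * π)) ^ (m / 2 - 1) = z,
    (2 : ℝ) ^ (m / 2 - 1) = w, (π / (N * h)) ^ (m / 2 - s) = v at hpowers ⊢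
  generalize Gamma (m / 2 - 1) = G at hG ⊢
  field_simp
  linear_combination Gamma ((s + 1) / 2) * Gamma ((s - 1) / 2) * hpowers

end

theorem nonvanishing_key_inequality_general (m s h N : ℝ) (hh : 0 < h) (hN : 0 < N)
    (hm : 4 * π / (N * h) + 8 / 3 ≤ m)
    (hineq : Real.Gamma ((s + 1) / 2) * Real.Gamma ((s - 1) / 2) * 2 ^ (m / 2 - 1)
        / Real.Gamma (m / 2 - 1) * (π / (N * h)) ^ (m / 2 - s) / (m / 2 - s) ≤ π) :
    (1 / 2) * (h / π) ^ s * Real.Gamma ((s + 1) / 2) * Real.Gamma ((s - 1) / 2)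
        * N ^ (s - m / 2) / (m / 2 - s)
      < h * (h / (2 * π)) ^ (m / 2 - 1)
          * ∫ y in Set.Ioi (2 * π / (N * h)), Real.exp (-y) * y ^ (m / 2 - 2) := by
  have ht : 0 < 2 * π / (N * h) := by positivity
  have hta : 2 * π / (N * h) ≤ (m / 2 - 1) - 1 / 3 := by
    have : 4 * π / (N * h) = 2 * (2 * π / (N * h)) := by ring
    linarith
  have hmedian := Gamma_div_two_lt_integral_Ioi ht hta
  rw [show m / 2 - 1 - 1 = m / 2 - 2 by ring] at hmedian
  have hG : 0 < Gamma (m / 2 - 1) := Gamma_pos_of_pos (by linarith)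
  calc _ = h * (h / (2 * π)) ^ (m / 2 - 1) * Gamma (m / 2 - 1) / (2 * π)
        * (Gamma ((s + 1) / 2) * Gamma ((s - 1) / 2) * 2 ^ (m / 2 - 1)
          / Gamma (m / 2 - 1) * (π / (N * h)) ^ (m / 2 - s) / (m / 2 - s)) :=
        half_mul_rpow_mul_Gamma_eq hh hN hG.ne'
    _ ≤ h * (h / (2 * π)) ^ (m / 2 - 1) * Gamma (m / 2 - 1) / (2 * π) * π :=
        mul_le_mul_of_nonneg_left hineq (by positivity)
    _ = h * (h / (2 * π)) ^ (m / 2 - 1) * (Gamma (m / 2 - 1) / 2) := by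
        field_simp
    _ < _ := mul_lt_mul_of_pos_left hmedian (by positivity)

theorem nonvanishing_key_inequality (m s h N : ℝ) (hh : 0 < h) (hN : 0 < N)
    (hm : 4 * π / (N * h) + 8 / 3 ≤ m) (hs1 : 1 < s) (hs2 : s < m / 2)
    (hineq : Real.Gamma ((s + 1) / 2) * Real.Gamma ((s - 1) / 2) * 2 ^ (m / 2 - 1)
        / Real.Gamma (m / 2 - 1) * (π / (N * h)) ^ (m / 2 - s) / (m / 2 - s) ≤ π) :
    (1 / 2) * (h / π) ^ s * Real.Gamma ((s + 1) / 2) * Real.Gamma ((s - 1) / 2)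
        * N ^ (s - m / 2) / (m / 2 - s)
      < h * (h / (2 * π)) ^ (m / 2 - 1)
          * ∫ y in Set.Ioi (2 * π / (N * h)), Real.exp (-y) * y ^ (m / 2 - 2) :=
  nonvanishing_key_inequality_general m s h N hh hN hm hineq
end
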